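/- For n ≥ 3 and 1 ≤ p ≤ n−1, the maximum value of a ≥ 0 such that the matrix M(n,p,a) is positive semidefinite equals a*(n,p) = (1/2)·√((1 + 1/p)(1 + 1/(n−p))). -/

import Mathlib

/-!
For `n = p + q`, the quadratic form of `M(n,p,a)` splits into two path blocks joined by one edge:
`P_p(y₀,…,y_{p-1}) + P_q(y_p,…,y_{n-1}) + 2a·y_{p-1}y_p`, with `P_m(z) = ∑ zᵢ² + ∑ zᵢzᵢ₊₁`.
By a sum-of-squares induction, `P_m(z) ≥ c_m z_{m-1}² = c_m z₀²` with `c_m = (1 + 1/m)/2`, and this is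
sharp (attained at the alternating ramp `(-1)ⁱ(i+1)`). Minimising over each block with its end value
fixed, `M(n,p,a) ⪰ 0` iff `c_p u² + c_q v² + 2a·uv ≥ 0` for all `u, v`, i.e. iff `a² ≤ c_p c_q`.
-/

open Finset Matrix

/-- `M(n,p,a)`: the ½-mask of order `n` with the pair at (1-based) positions
`(p,p+1),(p+1,p)` replaced by `a`. -/
noncomputable def Mmask1 (n p : ℕ) (a : ℝ) : Matrix (Fin n) (Fin n) ℝ :=
  Matrix.of fun i j =>
    if (i : ℕ) = j then 1
    else if (i : ℕ) + 1 = j ∨ (j : ℕ) + 1 = i then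
      (if min (i : ℕ) j + 1 = p then a else 1/2)
    else 0

def symmTridiag {R : Type*} [Zero R] (n : ℕ) (d e : ℕ → R) : Matrix (Fin n) (Fin n) R :=
  of fun i j =>
    if (i : ℕ) = j then d i
    else if (i : ℕ) + 1 = j ∨ (j : ℕ) + 1 = i then e (min i j)
    else 0

lemma symmTridiag_isSymm {R : Type*} [Zero R] (n : ℕ) (d e : ℕ → R) :
    (symmTridiag n d e).IsSymm := by
  refine IsSymm.ext fun i j => ?_
  simp only [symmTridiag, of_apply, min_comm (j : ℕ)]
  split_ifs <;> first | rfl | omega | congr 1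

lemma sum_range_ite_succ_mem_range {M : Type*} [AddCommMonoid M] (n : ℕ) (g : ℕ → M) :
    ∑ i ∈ range n, (if i + 1 ∈ range n then g i else 0) = ∑ i ∈ range (n - 1), g i := by
  cases n with
  | zero => simp
  | succ m =>
    rw [sum_range_succ, if_neg (by simp), add_zero, Nat.add_sub_cancel]
    exact sum_congr rfl fun i hi => if_pos (by simpa using hi)

lemma dotProduct_symmTridiag_mulVec {R : Type*} [CommSemiring R] (n : ℕ) (d e y : ℕ → R) :
    (fun i : Fin n => y i) ⬝ᵥ (symmTridiag n d e *ᵥ fun i => y i) =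
      ∑ i ∈ range n, d i * y i ^ 2 + 2 * ∑ i ∈ range (n - 1), e i * (y i * y (i + 1)) := by
  have hentry : ∀ i j : ℕ,
      y i * ((if i = j then d i else if i + 1 = j ∨ j + 1 = i then e (min i j) else 0) * y j) =
        (if j = i then d i * y i ^ 2 else 0) + (if j = i + 1 then e i * (y i * y j) else 0)
          + (if i = j + 1 then e j * (y j * y i) else 0) := by
    intro i j
    rw [min_def]
    split_ifs <;> subst_vars <;> first | ring1 | (exfalso; omega)
  have hrange : (fun i : Fin n => y i) ⬝ᵥ (symmTridiag n d e *ᵥ fun i => y i) =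
      ∑ i ∈ range n, ∑ j ∈ range n,
        y i * ((if i = j then d i else if i + 1 = j ∨ j + 1 = i then e (min i j) else 0) * y j) := by
    simp only [sum_range, dotProduct, mulVec, symmTridiag, of_apply, mul_sum]
  rw [hrange]
  simp only [hentry, sum_add_distrib]
  rw [sum_comm (s := range n) (t := range n) (f := fun i j => if i = j + 1 then _ else _)]
  simp only [sum_ite_eq', sum_ite_mem, inter_self, sum_range_ite_succ_mem_range]
  ring

def pathForm (m : ℕ) (y : ℕ → ℝ) : ℝ :=
  ∑ i ∈ range m, y i ^ 2 + ∑ i ∈ range (m - 1), y i * y (i + 1)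

lemma pathForm_one (y : ℕ → ℝ) : pathForm 1 y = y 0 ^ 2 := by
  simp [pathForm]

lemma pathForm_succ {m : ℕ} (hm : 1 ≤ m) (y : ℕ → ℝ) :
    pathForm (m + 1) y = pathForm m y + y (m - 1) * y m + y m ^ 2 := by
  obtain ⟨k, rfl⟩ := Nat.exists_eq_add_of_le' hm
  simp only [pathForm, Nat.add_sub_cancel, sum_range_succ]
  ring

lemma pathForm_congr {m : ℕ} {y z : ℕ → ℝ} (h : ∀ i < m, y i = z i) :
    pathForm m y = pathForm m z := by
  unfold pathForm
  congr 1 <;> refine sum_congr rfl fun i hi => ?_ <;> rw [mem_range] at hi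
  · rw [h i hi]
  · rw [h i (by omega), h (i + 1) (by omega)]

lemma pathForm_const_mul (m : ℕ) (c : ℝ) (y : ℕ → ℝ) :
    pathForm m (fun i => c * y i) = c ^ 2 * pathForm m y := by
  simp only [pathForm, mul_add, mul_sum]
  congr 1 <;> refine sum_congr rfl fun i _ => ?_ <;> ring

lemma pathForm_reflect (m : ℕ) (y : ℕ → ℝ) :
    pathForm m (fun i => y (m - 1 - i)) = pathForm m y := by
  unfold pathForm
  rw [sum_range_reflect (fun i => y i ^ 2), ← sum_range_reflect (fun i => y i * y (i + 1))]
  congr 1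
  refine sum_congr rfl fun i hi => ?_
  rw [mem_range] at hi
  dsimp only
  rw [mul_comm, show m - 1 - i = m - 1 - 1 - i + 1 by omega,
    show m - 1 - (i + 1) = m - 1 - 1 - i by omega]

lemma pathForm_bound_step {k : ℝ} (hk : 0 < k) (u v : ℝ) :
    (1 + 1 / (k + 1)) / 2 * v ^ 2 ≤ (1 + 1 / k) / 2 * u ^ 2 + u * v + v ^ 2 := by
  have hsos : (1 + 1 / k) / 2 * u ^ 2 + u * v + v ^ 2 - (1 + 1 / (k + 1)) / 2 * v ^ 2
      = ((k + 1) * u + k * v) ^ 2 / (2 * k * (k + 1)) := by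
    field_simp
    ring
  have : 0 ≤ ((k + 1) * u + k * v) ^ 2 / (2 * k * (k + 1)) := by positivity
  linarith

lemma le_pathForm {m : ℕ} (hm : 1 ≤ m) (y : ℕ → ℝ) :
    (1 + 1 / (m : ℝ)) / 2 * y (m - 1) ^ 2 ≤ pathForm m y := by
  induction m, hm using Nat.le_induction with
  | base => simp [pathForm_one]
  | succ k hk ih =>
    rw [pathForm_succ hk, Nat.add_sub_cancel]
    have hstep := pathForm_bound_step (by exact_mod_cast hk : (0 : ℝ) < k) (y (k - 1)) (y k)
    push_cast
    linarith

lemma le_pathForm_head {m : ℕ} (hm : 1 ≤ m) (y : ℕ → ℝ) :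
    (1 + 1 / (m : ℝ)) / 2 * y 0 ^ 2 ≤ pathForm m y := by
  simpa [pathForm_reflect] using le_pathForm hm (fun i => y (m - 1 - i))

lemma pathForm_neg_one_pow_mul_add_one (m : ℕ) :
    pathForm m (fun i => (-1) ^ i * ((i : ℝ) + 1)) = m * (m + 1) / 2 := by
  induction m with
  | zero => simp [pathForm]
  | succ k ih =>
    rcases Nat.eq_zero_or_pos k with rfl | hk
    · simp [pathForm_one]
    obtain ⟨j, rfl⟩ := Nat.exists_eq_add_of_le' hk
    have hsign : ((-1 : ℝ) ^ j) ^ 2 = 1 := by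
      rw [← pow_mul, mul_comm, pow_mul, neg_one_sq, one_pow]
    rw [pathForm_succ hk, ih, Nat.add_sub_cancel]
    push_cast
    linear_combination ((j : ℝ) + 2) * hsign

lemma exists_pathForm_eq {m : ℕ} (hm : 1 ≤ m) (u : ℝ) :
    ∃ y : ℕ → ℝ, y (m - 1) = u ∧ pathForm m y = (1 + 1 / (m : ℝ)) / 2 * u ^ 2 := by
  have hm0 : (m : ℝ) ≠ 0 := by positivity
  have hsign : ((-1 : ℝ) ^ (m - 1)) ^ 2 = 1 := by
    rw [← pow_mul, mul_comm, pow_mul, neg_one_sq, one_pow]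
  refine ⟨fun i => u * (-1) ^ (m - 1) / m * ((-1) ^ i * ((i : ℝ) + 1)), ?_, ?_⟩
  · dsimp only
    rw [Nat.cast_sub hm]
    field_simp
    linear_combination u * (m : ℝ) * hsign
  · rw [pathForm_const_mul, pathForm_neg_one_pow_mul_add_one, div_pow, mul_pow, hsign]
    field_simp

lemma exists_pathForm_eq_head {m : ℕ} (hm : 1 ≤ m) (u : ℝ) :
    ∃ y : ℕ → ℝ, y 0 = u ∧ pathForm m y = (1 + 1 / (m : ℝ)) / 2 * u ^ 2 := by
  obtain ⟨y, hy, hQ⟩ := exists_pathForm_eq hm u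
  exact ⟨fun i => y (m - 1 - i), by simpa using hy, by rw [pathForm_reflect, hQ]⟩

lemma Mmask1_eq_symmTridiag (n p : ℕ) (a : ℝ) :
    Mmask1 n p a = symmTridiag n 1 (fun k => if k + 1 = p then a else 1 / 2) := rfl

lemma Mmask1_isHermitian (n p : ℕ) (a : ℝ) : (Mmask1 n p a).IsHermitian := by
  rw [Mmask1_eq_symmTridiag, isHermitian_iff_isSymm]
  exact symmTridiag_isSymm _ _ _

lemma dotProduct_Mmask1_mulVec {p q : ℕ} (hp : 1 ≤ p) (hq : 1 ≤ q) (a : ℝ) (y : ℕ → ℝ) :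
    (fun i : Fin (p + q) => y i) ⬝ᵥ (Mmask1 (p + q) p a *ᵥ fun i => y i) =
      pathForm p y + pathForm q (fun j => y (p + j)) + 2 * a * (y (p - 1) * y p) := by
  obtain ⟨p, rfl⟩ := Nat.exists_eq_add_of_le' hp
  obtain ⟨q, rfl⟩ := Nat.exists_eq_add_of_le' hq
  rw [Mmask1_eq_symmTridiag, dotProduct_symmTridiag_mulVec,
    show p + 1 + (q + 1) - 1 = p + 1 + q by omega]
  simp only [pathForm, Pi.one_apply, one_mul, Nat.add_sub_cancel, sum_range_add _ (p + 1),
    sum_range_succ _ p, if_true]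
  have hleft : ∀ i ∈ range p, (if i + 1 = p + 1 then a else 1 / 2) * (y i * y (i + 1)) =
      1 / 2 * (y i * y (i + 1)) := fun i hi => by rw [if_neg (by simp at hi; omega)]
  have hright : ∀ j ∈ range q, (if p + 1 + j + 1 = p + 1 then a else 1 / 2) *
      (y (p + 1 + j) * y (p + 1 + j + 1)) = 1 / 2 * (y (p + 1 + j) * y (p + 1 + (j + 1))) :=
    fun j _ => by rw [if_neg (by omega), add_assoc (p + 1)]
  rw [sum_congr rfl hleft, sum_congr rfl hright, ← mul_sum, ← mul_sum]
  ring

lemma Mmask1_posSemidef_of_sq_le {p q : ℕ} (hp : 1 ≤ p) (hq : 1 ≤ q) {a : ℝ}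
    (ha : a ^ 2 ≤ (1 + 1 / (p : ℝ)) / 2 * ((1 + 1 / (q : ℝ)) / 2)) :
    (Mmask1 (p + q) p a).PosSemidef := by
  refine PosSemidef.of_dotProduct_mulVec_nonneg (Mmask1_isHermitian _ _ _) fun x => ?_
  set y : ℕ → ℝ := fun i => if h : i < p + q then x ⟨i, h⟩ else 0
  have hx : x = fun i : Fin (p + q) => y i := funext fun i => by simp [y]
  rw [star_trivial, hx, dotProduct_Mmask1_mulVec hp hq]
  have hL := le_pathForm hp y
  have hR := le_pathForm_head hq fun j => y (p + j)
  have hc : 0 < (1 + 1 / (p : ℝ)) / 2 := by positivity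
  simp only [add_zero] at hR
  -- `c·(c u² + d v² + 2a uv) = (c u + a v)² + (c d - a²) v²`
  nlinarith [sq_nonneg ((1 + 1 / (p : ℝ)) / 2 * y (p - 1) + a * y p), sq_nonneg (y p)]

lemma le_of_Mmask1_posSemidef {p q : ℕ} (hp : 1 ≤ p) (hq : 1 ≤ q) {a : ℝ}
    (h : (Mmask1 (p + q) p a).PosSemidef) :
    a ≤ √((1 + 1 / (p : ℝ)) / 2 * ((1 + 1 / (q : ℝ)) / 2)) := by
  set c := (1 + 1 / (p : ℝ)) / 2
  set d := (1 + 1 / (q : ℝ)) / 2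
  have hc : 0 < c := by positivity
  have hd : 0 < d := by positivity
  obtain ⟨yL, hyL, hQL⟩ := exists_pathForm_eq hp √d
  obtain ⟨yR, hyR, hQR⟩ := exists_pathForm_eq_head hq (-√c)
  -- glue block minimisers with end values `√d, -√c`: the form becomes `2cd - 2a√(cd)`
  set y : ℕ → ℝ := fun i => if i < p then yL i else yR (i - p)
  have hQ := h.dotProduct_mulVec_nonneg fun i : Fin (p + q) => y i
  have hleft : pathForm p y = pathForm p yL := pathForm_congr fun i hi => if_pos hi
  have hright : (fun j => y (p + j)) = yR := funext fun j => by simp [y]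
  have hu : y (p - 1) = √d := (if_pos (by omega)).trans hyL
  have hv : y p = -√c := by simp [y, hyR]
  rw [star_trivial, dotProduct_Mmask1_mulVec hp hq, hleft, hright, hu, hv, hQL, hQR,
    Real.sq_sqrt hd.le, neg_sq, Real.sq_sqrt hc.le] at hQ
  change 0 ≤ c * d + d * c + 2 * a * (√d * -√c) at hQ
  have hs : 0 < √c * √d := by positivity
  have hs2 : (√c * √d) ^ 2 = c * d := by rw [mul_pow, Real.sq_sqrt hc.le, Real.sq_sqrt hd.le]
  rw [Real.sqrt_mul hc.le]
  nlinarith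

theorem max_a_posSemidef_Mmask1_general (n p : ℕ) (hp : 1 ≤ p) (hpn : p ≤ n - 1) :
    IsGreatest {a : ℝ | 0 ≤ a ∧ (Mmask1 n p a).PosSemidef}
      ((1 / 2) * Real.sqrt ((1 + 1 / (p : ℝ)) * (1 + 1 / ((n : ℝ) - p)))) := by
  obtain ⟨q, hq, rfl⟩ : ∃ q, 1 ≤ q ∧ n = p + q := ⟨n - p, by omega, by omega⟩
  have hcast : ((p + q : ℕ) : ℝ) - p = q := by push_cast; ring
  have hsqrt : (1 / 2) * √((1 + 1 / (p : ℝ)) * (1 + 1 / (q : ℝ))) =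
      √((1 + 1 / (p : ℝ)) / 2 * ((1 + 1 / (q : ℝ)) / 2)) := by
    rw [show (1 + 1 / (p : ℝ)) / 2 * ((1 + 1 / (q : ℝ)) / 2) =
        (1 / 2) ^ 2 * ((1 + 1 / (p : ℝ)) * (1 + 1 / (q : ℝ))) by ring,
      Real.sqrt_mul (by norm_num : (0 : ℝ) ≤ (1 / 2) ^ 2), Real.sqrt_sq (by norm_num)]
  rw [hcast, hsqrt]
  refine ⟨⟨Real.sqrt_nonneg _, Mmask1_posSemidef_of_sq_le hp hq ?_⟩,
    fun a ha => le_of_Mmask1_posSemidef hp hq ha.2⟩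
  rw [Real.sq_sqrt (by positivity)]

/-- The maximum value of `a ≥ 0` with `M(n,p,a) ⪰ 0` is
`a*(n,p) = (1/2)√((1+1/p)(1+1/(n−p)))`. -/
theorem max_a_posSemidef_Mmask1 (n p : ℕ) (hn : 3 ≤ n) (hp : 1 ≤ p) (hpn : p ≤ n - 1) :
    IsGreatest {a : ℝ | 0 ≤ a ∧ (Mmask1 n p a).PosSemidef}
      ((1 / 2) * Real.sqrt ((1 + 1 / (p : ℝ)) * (1 + 1 / ((n : ℝ) - p)))) :=
  max_a_posSemidef_Mmask1_general n p hp hpn
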